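/- Let M be a semi-linear O_L[G]-module, flat over O_L, and set h = 2⌊v_K(𝔇_{L/K})⌋. Let N ≥ 0 and m ≥ N + h. Then the natural map f_N: M^G/π^{N+1}M^G → (M/π^{N+1}M)^G is injective and its image equals the image of the reduction map f_{m,N}: (M/π^{m+1}M)^G → (M/π^{N+1}M)^G. In particular f_N induces an isomorphism M^G/π^{N+1}M^G ≅ Im(f_{m,N}), so M^G/π^{N+1}M^G is determined by the G-module M/π^{m+1}M. -/

import Mathlib

/-!
Injectivity holds because `π` is a non-zero-divisor on the flat module `M` and the action
commutes with `π`. For the images, the trace characterisation of the different gives `c ∈ O_L`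
with `v_K(Tr c) ≤ ⌊v_K(𝔇_{L/K})⌋`; rescaling by a unit, `Tr c = π^n`. If `x` is invariant
modulo `π^{m+1}`, then `∑_g g(c x) = π^n x + π^{m+1} w` is invariant, so the element
`x + π^{m+1-n} w` is invariant (as `π^n` is a non-zero-divisor), and it is congruent to `x`
modulo `π^{N+1}` because `m + 1 - n ≥ N + 1`.
-/

open nonZeroDivisors IsLocalRing

section SemilinearAction

variable {G A B M : Type*} [CommRing A] [CommRing B] [Algebra A B]
  [AddCommGroup M] [Module A M] [Module B M] [IsScalarTower A B M]
  {σ : G → B ≃ₐ[A] B} {ρ : G → M →+ M}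

lemma map_smul_of_semilinear (hsmul : ∀ g (b : B) x, ρ g (b • x) = σ g b • ρ g x)
    (g : G) (a : A) (x : M) : ρ g (a • x) = a • ρ g x := by
  rw [← algebraMap_smul B a x, hsmul, AlgEquiv.commutes, algebraMap_smul]

lemma apply_eq_self_of_smul (hsmul : ∀ g (b : B) x, ρ g (b • x) = σ g b • ρ g x)
    {a : A} (ha : IsSMulRegular M a) {g : G} {z : M} (h : ρ g (a • z) = a • z) :
    ρ g z = z :=
  ha <| show a • ρ g z = a • z by rw [← map_smul_of_semilinear hsmul, h]

lemma sum_apply_smul_eq [Fintype G] (hsmul : ∀ g (b : B) x, ρ g (b • x) = σ g b • ρ g x)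
    (c : B) {x : M} {r : A} {y : G → M} (hx : ∀ g, ρ g x - x = r • y g) :
    ∑ g, ρ g (c • x) = (∑ g, σ g c) • x + r • ∑ g, σ g c • y g := by
  have hx' : ∀ g, ρ g x = x + r • y g := fun g => by rw [← hx, add_sub_cancel]
  simp_rw [hsmul, hx', smul_add, smul_comm _ r, Finset.sum_add_distrib, Finset.sum_smul,
    Finset.smul_sum]

variable [Group G] [Fintype G]

lemma apply_sum_apply (hmul : ∀ g h x, ρ (g * h) x = ρ g (ρ h x)) (g : G) (v : M) :
    ρ g (∑ h, ρ h v) = ∑ h, ρ h v := by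
  rw [map_sum]
  exact Fintype.sum_equiv (Equiv.mulLeft g) _ _ fun h => (hmul g h v).symm

lemma exists_invariant_sub_eq_smul (hmul : ∀ g h x, ρ (g * h) x = ρ g (ρ h x))
    (hsmul : ∀ g (b : B) x, ρ g (b • x) = σ g b • ρ g x)
    {a s : A} (ha : IsSMulRegular M a) {c : B} (hc : ∑ g, σ g c = algebraMap A B a)
    {x : M} {y : G → M} (hx : ∀ g, ρ g x - x = (a * s) • y g) :
    ∃ z : M, (∀ g, ρ g z = z) ∧ ∃ w : M, x - z = s • w := by
  set w := ∑ g, σ g c • y g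
  have hT : a • (x + s • w) = ∑ g, ρ g (c • x) := by
    rw [sum_apply_smul_eq hsmul c hx, hc, algebraMap_smul, smul_add, smul_smul]
  refine ⟨x + s • w, fun g => apply_eq_self_of_smul hsmul ha ?_, -w, by simp⟩
  rw [hT]
  exact apply_sum_apply hmul g _

end SemilinearAction

lemma IsDiscreteValuationRing.exists_eq_unit_mul_pow_of_not_pow_dvd {A : Type*} [CommRing A]
    [IsDomain A] [IsDiscreteValuationRing A] {π a : A} (hπ : Irreducible π) {j : ℕ}
    (h : ¬ π ^ j ∣ a) : ∃ n < j, ∃ u : Aˣ, a = u * π ^ n := by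
  have ha : a ≠ 0 := by rintro rfl; exact h (dvd_zero _)
  obtain ⟨n, u, rfl⟩ := eq_unit_mul_pow_irreducible ha hπ
  refine ⟨n, ?_, u, rfl⟩
  by_contra! hjn
  exact h ((pow_dvd_pow π hjn).mul_left _)

lemma sum_galRestrict_eq_algebraMap_intTrace (A K L B : Type*) [CommRing A] [CommRing B]
    [Field K] [Field L] [IsDomain A] [IsIntegrallyClosed A] [Algebra A K] [IsFractionRing A K]
    [Algebra K L] [FiniteDimensional K L] [IsGalois K L] [Algebra A B] [Algebra B L]
    [Algebra A L] [IsScalarTower A B L] [IsScalarTower A K L] [IsIntegralClosure B A L]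
    [IsDomain B] [IsIntegrallyClosed B] [Module.Finite A B] [Module.IsTorsionFree A B] (x : B) :
    ∑ σ : Gal(L/K), galRestrict A K L B σ x = algebraMap A B (Algebra.intTrace A B x) := by
  apply IsIntegralClosure.algebraMap_injective B A L
  rw [← IsScalarTower.algebraMap_apply, IsScalarTower.algebraMap_apply A K L,
    Algebra.algebraMap_intTrace (L := L), trace_eq_sum_automorphisms, map_sum]
  simp only [algebraMap_galRestrict_apply]

section Different

variable {A B : Type*} [CommRing A] [IsDomain A] [IsIntegrallyClosed A] [CommRing B]
  [IsDedekindDomain B] [Algebra A B] [Module.IsTorsionFree A B] [Module.Finite A B]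

lemma differentIdeal_le_span_of_dvd_intTrace (K L : Type*) [Field K] [Field L] [Algebra A K]
    [IsFractionRing A K] [Algebra K L] [FiniteDimensional K L] [Algebra.IsSeparable K L]
    [Algebra B L] [Algebra A L] [IsScalarTower A B L] [IsScalarTower A K L]
    [IsIntegralClosure B A L] {a : A} (ha : a ≠ 0) (h : ∀ b : B, a ∣ Algebra.intTrace A B b) :
    differentIdeal A B ≤ Ideal.span {algebraMap A B a} := by
  have := IsIntegralClosure.isFractionRing_of_finite_extension A K L B
  have haB : algebraMap A B a ≠ 0 :=
    (map_ne_zero_iff _ (FaithfulSMul.algebraMap_injective A B)).mpr ha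
  have haK : algebraMap A K a ≠ 0 := (map_ne_zero_iff _ (IsFractionRing.injective A K)).mpr ha
  -- `(a)⁻¹ = a⁻¹ B`, and `Tr (a⁻¹ b) = a⁻¹ Tr b ∈ A`.
  rw [differentialIdeal_le_iff (K := K) (L := L) (by simpa [Ideal.span_singleton_eq_bot])]
  rintro _ ⟨v, hv, rfl⟩
  have hv : v ∈ ((Ideal.span {algebraMap A B a} : Ideal B) : FractionalIdeal B⁰ L)⁻¹ := hv
  rw [FractionalIdeal.coeIdeal_span_singleton, FractionalIdeal.spanSingleton_inv,
    FractionalIdeal.mem_spanSingleton] at hv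
  obtain ⟨b, rfl⟩ := hv
  obtain ⟨t, ht⟩ := h b
  refine Submodule.mem_one.mpr ⟨t, ?_⟩
  have hab : algebraMap B L (algebraMap A B a) = algebraMap K L (algebraMap A K a) := by
    rw [← IsScalarTower.algebraMap_apply, IsScalarTower.algebraMap_apply A K L]
  rw [LinearMap.restrictScalars_apply, Algebra.smul_def, hab, ← map_inv₀, mul_comm,
    ← Algebra.smul_def, map_smul, ← Algebra.algebraMap_intTrace (A := A), ht, map_mul,
    smul_eq_mul, inv_mul_cancel_left₀ haK]

lemma exists_intTrace_not_pow_dvd (K L : Type*) [Field K] [Field L] [Algebra A K]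
    [IsFractionRing A K] [Algebra K L] [FiniteDimensional K L] [Algebra.IsSeparable K L]
    [Algebra B L] [Algebra A L] [IsScalarTower A B L] [IsScalarTower A K L]
    [IsIntegralClosure B A L] [IsLocalRing A] {π : A} (hπ : Irreducible π) {P : Ideal B}
    {d j : ℕ} (hd : ¬ differentIdeal A B ≤ P ^ (d + 1))
    (hj : d < Ideal.ramificationIdx' (maximalIdeal A) P * j) :
    ∃ c : B, ¬ π ^ j ∣ Algebra.intTrace A B c := by
  by_contra! h
  refine hd ((differentIdeal_le_span_of_dvd_intTrace K L (pow_ne_zero j hπ.ne_zero) h).trans ?_)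
  rw [Ideal.span_le, Set.singleton_subset_iff, SetLike.mem_coe, map_pow]
  refine Ideal.pow_le_pow_right hj ?_
  rw [pow_mul]
  refine Ideal.pow_mem_pow ?_ j
  exact Ideal.le_pow_ramificationIdx' (Ideal.mem_map_of_mem _ hπ.not_isUnit)

end Different

theorem exists_sum_galRestrict_eq_algebraMap_pow (A K L B : Type*) [CommRing A] [CommRing B]
    [Field K] [Field L] [IsDomain A] [IsDiscreteValuationRing A] [Algebra A K]
    [IsFractionRing A K] [Algebra K L] [FiniteDimensional K L] [IsGalois K L] [Algebra A B]
    [Algebra B L] [Algebra A L] [IsScalarTower A B L] [IsScalarTower A K L]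
    [IsIntegralClosure B A L] [IsDedekindDomain B] [Module.IsTorsionFree A B]
    {π : A} (hπ : Irreducible π) (P : Ideal B) [P.IsMaximal] {d : ℕ}
    (hd : ¬ differentIdeal A B ≤ P ^ (d + 1)) {k : ℕ}
    (hk : d / Ideal.ramificationIdx' (maximalIdeal A) P ≤ k) :
    ∃ c : B, ∃ n ≤ k, ∑ σ : Gal(L/K), galRestrict A K L B σ c = algebraMap A B (π ^ n) := by
  have : Module.Finite A B := IsIntegralClosure.finite A K L B
  have hle : (maximalIdeal A).map (algebraMap A B) ≤ P := Ideal.map_le_iff_le_comap.mpr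
    (eq_maximalIdeal (Ideal.isMaximal_comap_of_isIntegral_of_isMaximal P)).ge
  have he : Ideal.ramificationIdx' (maximalIdeal A) P ≠ 0 :=
    Ideal.IsDedekindDomain.ramificationIdx'_ne_zero ((Ideal.map_eq_bot_iff_of_injective
      (FaithfulSMul.algebraMap_injective A B)).not.mpr (IsDiscreteValuationRing.not_a_field A))
      inferInstance hle
  have hj : d < Ideal.ramificationIdx' (maximalIdeal A) P * (k + 1) :=
    (Nat.lt_mul_div_succ d (Nat.pos_of_ne_zero he)).trans_le (by gcongr)
  obtain ⟨c, hc⟩ := exists_intTrace_not_pow_dvd K L hπ hd hj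
  obtain ⟨n, hn, u, hu⟩ := IsDiscreteValuationRing.exists_eq_unit_mul_pow_of_not_pow_dvd hπ hc
  refine ⟨(↑u⁻¹ : A) • c, n, Nat.lt_succ_iff.mp hn, ?_⟩
  rw [sum_galRestrict_eq_algebraMap_intTrace, map_smul, hu, smul_eq_mul, Units.inv_mul_cancel_left]

theorem invariants_mod_pi_determined_general
    (A K L B : Type*) [CommRing A] [CommRing B] [Field K] [Field L]
    [IsDomain A] [IsDiscreteValuationRing A]
    [Algebra A K] [IsFractionRing A K]
    [Algebra K L] [FiniteDimensional K L] [IsGalois K L]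
    [Algebra A B] [Algebra B L] [Algebra A L]
    [IsScalarTower A B L] [IsScalarTower A K L]
    [IsIntegralClosure B A L]
    [IsDedekindDomain B] [NoZeroSMulDivisors A B]
    (M : Type*) [AddCommGroup M] [Module B M] [Module A M] [IsScalarTower A B M]
    [Module.Flat B M]
    (ρ : (L ≃ₐ[K] L) → M → M)
    (hmul : ∀ g h x, ρ (g * h) x = ρ g (ρ h x))
    (hadd : ∀ g x y, ρ g (x + y) = ρ g x + ρ g y)
    (hsmul : ∀ g (b : B) x, ρ g (b • x) = galRestrict A K L B g b • ρ g x)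
    (π : A) (hπ : Irreducible π)
    (P : Ideal B) (hP : P.IsMaximal)
    (d : ℕ) (hd : differentIdeal A B ≤ P ^ d ∧ ¬ differentIdeal A B ≤ P ^ (d + 1))
    (e : ℕ) (he : e = Ideal.ramificationIdx' (IsLocalRing.maximalIdeal A) P)
    (N m : ℕ) (hm : N + 2 * (d / e) ≤ m) :
    (∀ x : M, (∀ g, ρ g x = x) → (∃ y : M, x = π ^ (N + 1) • y) →
      ∃ z : M, (∀ g, ρ g z = z) ∧ x = π ^ (N + 1) • z) ∧
    (∀ x : M, (∀ g, ∃ y : M, ρ g x - x = π ^ (m + 1) • y) →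
      ∃ z : M, (∀ g, ρ g z = z) ∧ ∃ y : M, x - z = π ^ (N + 1) • y) ∧
    (∀ z : M, (∀ g, ρ g z = z) → ∀ g, ∃ y : M, ρ g z - z = π ^ (m + 1) • y) := by
  have : Module.IsTorsionFree A M := .trans_faithfulSMul A B M
  have hreg (n : ℕ) : IsSMulRegular M (π ^ n) := .of_ne_zero (pow_ne_zero n hπ.ne_zero)
  let ρ' (g : L ≃ₐ[K] L) : M →+ M := .mk' (ρ g) (hadd g)
  refine ⟨?_, ?_, fun z hz g => ⟨0, by rw [hz g, sub_self, smul_zero]⟩⟩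
  · rintro x hx ⟨y, rfl⟩
    exact ⟨y, fun g => apply_eq_self_of_smul (ρ := ρ') hsmul (hreg _) (hx g), rfl⟩
  · intro x hx
    choose y hy using hx
    obtain ⟨c, n, hn, hc⟩ := exists_sum_galRestrict_eq_algebraMap_pow A K L B hπ P hd.2
      (k := 2 * (d / e)) (by rw [← he]; omega)
    have hx (g) : ρ' g x - x = (π ^ n * π ^ (m + 1 - n)) • y g := by
      rw [← pow_add, Nat.add_sub_cancel' (by omega)]
      exact hy g
    obtain ⟨z, hz, w, hw⟩ := exists_invariant_sub_eq_smul hmul hsmul (hreg n) hc hx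
    refine ⟨z, hz, π ^ (m - n - N) • w, ?_⟩
    rw [hw, smul_smul, ← pow_add]
    congr 2
    omega

/-- Let `M` be a semi-linear `O_L[G]`-module, flat over `O_L = B`, and let
`h = 2⌊v_K(𝔇_{L/K})⌋ = 2 * (d / e)`.  Let `N ≥ 0` and `m ≥ N + h`.  Then the natural
map `f_N : M^G/π^{N+1}M^G → (M/π^{N+1}M)^G` is injective and its image equals the
image of the reduction map `f_{m,N} : (M/π^{m+1}M)^G → (M/π^{N+1}M)^G`; in particular
`M^G/π^{N+1}M^G` is determined by the `G`-module `M/π^{m+1}M`.  Elementwise: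
(1) (injectivity) every `G`-invariant `x` divisible by `π^{N+1}` in `M` is `π^{N+1}`
    times a `G`-invariant element;
(2) (Im f_{m,N} ⊆ Im f_N) every `x` which is `G`-invariant modulo `π^{m+1}M` is
    congruent modulo `π^{N+1}M` to a `G`-invariant element;
(3) (Im f_N ⊆ Im f_{m,N}) every `G`-invariant element is `G`-invariant modulo
    `π^{m+1}M`. -/
theorem invariants_mod_pi_determined
    (A K L B : Type*) [CommRing A] [CommRing B] [Field K] [Field L]
    [IsDomain A] [IsDiscreteValuationRing A] [IsIntegrallyClosed A]
    [Algebra A K] [IsFractionRing A K]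
    [Algebra K L] [FiniteDimensional K L] [IsGalois K L]
    [Algebra A B] [Algebra B L] [Algebra A L]
    [IsScalarTower A B L] [IsScalarTower A K L]
    [IsIntegralClosure B A L] [IsDomain B]
    [IsDedekindDomain B] [NoZeroSMulDivisors A B]
    (M : Type*) [AddCommGroup M] [Module B M] [Module A M] [IsScalarTower A B M]
    [Module.Flat B M]
    (ρ : (L ≃ₐ[K] L) → M → M)
    (hone : ∀ x, ρ 1 x = x)
    (hmul : ∀ g h x, ρ (g * h) x = ρ g (ρ h x))
    (hadd : ∀ g x y, ρ g (x + y) = ρ g x + ρ g y)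
    (hsmul : ∀ g (b : B) x, ρ g (b • x) = galRestrict A K L B g b • ρ g x)
    (π : A) (hπ : Irreducible π)
    (P : Ideal B) (hP : P.IsMaximal)
    (d : ℕ) (hd : differentIdeal A B ≤ P ^ d ∧ ¬ differentIdeal A B ≤ P ^ (d + 1))
    (e : ℕ) (he : e = Ideal.ramificationIdx' (IsLocalRing.maximalIdeal A) P)
    (N m : ℕ) (hm : N + 2 * (d / e) ≤ m) :
    (∀ x : M, (∀ g, ρ g x = x) → (∃ y : M, x = π ^ (N + 1) • y) →
      ∃ z : M, (∀ g, ρ g z = z) ∧ x = π ^ (N + 1) • z) ∧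
    (∀ x : M, (∀ g, ∃ y : M, ρ g x - x = π ^ (m + 1) • y) →
      ∃ z : M, (∀ g, ρ g z = z) ∧ ∃ y : M, x - z = π ^ (N + 1) • y) ∧
    (∀ z : M, (∀ g, ρ g z = z) → ∀ g, ∃ y : M, ρ g z - z = π ^ (m + 1) • y) :=
  invariants_mod_pi_determined_general A K L B M ρ hmul hadd hsmul π hπ P hP d hd e he N m hm
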